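/- Suppose $f \in L^2_{\mathbb{R}}([-1/2,1/2],\mathbb{C})$ has an expansion $f = \sum_{k < 0} c_k \mathfrak{e}_k$ over negative half-integers $k$ with real square-summable coefficients, and let $F_N = \sum_{-N < k < 0} c_k \mathfrak{E}_k$ with $\mathfrak{E}_k(x+iy) = e^{i\pi(-k/2-1/4)}e^{-i\pi kx + \pi k y}$. Then for each $N$, $\int_{-1/2}^{1/2} F_N(x)^2\,dx = \int_0^\infty |F_N(-1/2+iy)|^2\,dy + \int_0^\infty |F_N(1/2+iy)|^2\,dy \ge 0$. -/

import Mathlib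

open Complex Real MeasureTheory

/-- The strip eigenfunction `𝔈ₖ(x+iy) = e^{iπ(-k/2-1/4)} e^{-iπkx + πky}`. -/
noncomputable def Emode (k : ℝ) (x y : ℝ) : ℂ :=
  Complex.exp ((Real.pi : ℂ) * Complex.I * (-(k : ℂ)/2 - 1/4)) *
    Complex.exp (-(Real.pi : ℂ) * Complex.I * (k : ℂ) * (x : ℂ) + (Real.pi : ℂ) * (k : ℂ) * (y : ℂ))

lemma integral_exp_neg_mul_Ioi_aux {b : ℝ} (hb : 0 < b) :
    ∫ y in Set.Ioi (0:ℝ), Real.exp (-(b * y)) = 1 / b := by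
  have h := integral_comp_mul_left_Ioi (fun x => Real.exp (-x)) 0 hb
  simp only [mul_zero, integral_exp_neg_Ioi_zero, smul_eq_mul, mul_one] at h
  rw [one_div]
  exact h

lemma emode_cross (n m : ℕ) :
    (∫ x in (-(1:ℝ)/2)..(1/2),
        Emode (-((n : ℝ) + 1/2)) x 0 * Emode (-((m : ℝ) + 1/2)) x 0)
      = (((1 + (-1:ℝ)^(n+m)) / (Real.pi * ((n:ℝ)+(m:ℝ)+1)) : ℝ) : ℂ) := by
  have hπ : (Real.pi : ℂ) ≠ 0 := Complex.ofReal_ne_zero.mpr Real.pi_ne_zero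
  have hs : ((n:ℂ) + (m:ℂ) + 1) ≠ 0 := by
    have : ((n:ℂ) + (m:ℂ) + 1) = ((n+m+1 : ℕ) : ℂ) := by push_cast; ring
    rw [this]
    exact Nat.cast_ne_zero.mpr (Nat.succ_ne_zero _)
  set cc : ℂ := (Real.pi:ℂ) * Complex.I * ((n:ℂ)+(m:ℂ)+1) with hcc
  have hc : cc ≠ 0 := mul_ne_zero (mul_ne_zero hπ Complex.I_ne_zero) hs
  have hprod : ∀ x : ℝ, Emode (-((n : ℝ) + 1/2)) x 0 * Emode (-((m : ℝ) + 1/2)) x 0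
      = Complex.exp ((Real.pi:ℂ) * Complex.I * ((n:ℂ)+(m:ℂ))/2) * Complex.exp (cc * x) := by
    intro x
    simp only [Emode, ← Complex.exp_add, hcc]
    congr 1
    push_cast
    ring
  simp only [hprod]
  rw [intervalIntegral.integral_const_mul, integral_exp_mul_complex hc]
  have key1 : Complex.exp ((Real.pi:ℂ) * Complex.I * ((n:ℂ)+(m:ℂ))/2) *
      Complex.exp (cc * ((1:ℝ)/2 : ℝ)) = (-1:ℂ)^(n+m) * Complex.I := by
    rw [← Complex.exp_add]
    have h2 : (Real.pi:ℂ) * Complex.I * ((n:ℂ)+(m:ℂ))/2 + cc * ((1:ℝ)/2 : ℝ)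
        = ((n+m : ℕ):ℂ) * ((Real.pi:ℂ) * Complex.I) + ((Real.pi:ℂ)/2) * Complex.I := by
      rw [hcc]; push_cast; ring
    rw [h2, Complex.exp_add, Complex.exp_nat_mul, Complex.exp_pi_mul_I,
      Complex.exp_mul_I, Complex.cos_pi_div_two, Complex.sin_pi_div_two]
    ring
  have key2 : Complex.exp ((Real.pi:ℂ) * Complex.I * ((n:ℂ)+(m:ℂ))/2) *
      Complex.exp (cc * (-(1:ℝ)/2 : ℝ)) = -Complex.I := by
    rw [← Complex.exp_add]
    have h2 : (Real.pi:ℂ) * Complex.I * ((n:ℂ)+(m:ℂ))/2 + cc * ((-(1:ℝ)/2 : ℝ) : ℂ)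
        = (-((Real.pi:ℂ)/2)) * Complex.I := by
      rw [hcc]; push_cast; ring
    rw [h2, Complex.exp_mul_I, Complex.cos_neg, Complex.sin_neg,
      Complex.cos_pi_div_two, Complex.sin_pi_div_two]
    ring
  rw [mul_div_assoc', mul_sub, key1, key2, hcc]
  push_cast
  rw [div_eq_div_iff (by exact mul_ne_zero (mul_ne_zero hπ Complex.I_ne_zero) hs)
    (mul_ne_zero hπ hs)]
  rw [sub_neg_eq_add]
  ring_nf


lemma emode_left (n : ℕ) (y : ℝ) :
    Emode (-((n : ℝ) + 1/2)) (-(1:ℝ)/2) y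
      = Complex.exp (-(Real.pi:ℂ) * Complex.I/4) *
          ((Real.exp (-(Real.pi * ((n:ℝ)+1/2) * y)) : ℝ) : ℂ) := by
  rw [Complex.ofReal_exp]
  simp only [Emode, ← Complex.exp_add]
  congr 1
  push_cast
  ring

lemma emode_right (n : ℕ) (y : ℝ) :
    Emode (-((n : ℝ) + 1/2)) ((1:ℝ)/2) y
      = Complex.exp ((Real.pi:ℂ) * Complex.I/4) *
          (((-1:ℝ)^n * Real.exp (-(Real.pi * ((n:ℝ)+1/2) * y)) : ℝ) : ℂ) := by
  have h : (((-1:ℝ)^n * Real.exp (-(Real.pi * ((n:ℝ)+1/2) * y)) : ℝ) : ℂ)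
      = Complex.exp ((n:ℂ) * ((Real.pi:ℂ) * Complex.I)) *
        Complex.exp ((-(Real.pi * ((n:ℝ)+1/2) * y) : ℝ) : ℂ) := by
    rw [Complex.exp_nat_mul, Complex.exp_pi_mul_I, ← Complex.ofReal_exp]
    push_cast
    ring
  rw [h]
  simp only [Emode, ← Complex.exp_add]
  congr 1
  push_cast
  ring

lemma boundary_integral (d : ℕ → ℝ) (N : ℕ) :
    ∫ y in Set.Ioi (0:ℝ),
        (∑ n ∈ Finset.range N, d n * Real.exp (-(Real.pi * ((n:ℝ)+1/2) * y)))^2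
      = ∑ n ∈ Finset.range N, ∑ m ∈ Finset.range N,
          d n * d m / (Real.pi * ((n:ℝ)+(m:ℝ)+1)) := by
  have hpt : ∀ y : ℝ,
      (∑ n ∈ Finset.range N, d n * Real.exp (-(Real.pi * ((n:ℝ)+1/2) * y)))^2
      = ∑ n ∈ Finset.range N, ∑ m ∈ Finset.range N,
          (d n * d m) * Real.exp (-(Real.pi * ((n:ℝ)+(m:ℝ)+1) * y)) := by
    intro y
    rw [sq, Finset.sum_mul_sum]
    refine Finset.sum_congr rfl fun n _ => Finset.sum_congr rfl fun m _ => ?_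
    rw [mul_mul_mul_comm, ← Real.exp_add]
    congr 1
    ring
  simp only [hpt]
  have hb : ∀ n m : ℕ, (0:ℝ) < Real.pi * ((n:ℝ)+(m:ℝ)+1) := by
    intro n m; positivity
  have hint : ∀ n m : ℕ, IntegrableOn
      (fun y : ℝ => (d n * d m) * Real.exp (-(Real.pi * ((n:ℝ)+(m:ℝ)+1) * y)))
      (Set.Ioi (0:ℝ)) := by
    intro n m
    have := (exp_neg_integrableOn_Ioi 0 (hb n m)).const_mul (d n * d m)
    simpa [neg_mul, IntegrableOn] using this
  rw [MeasureTheory.integral_finset_sum _ (fun n _ =>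
    MeasureTheory.integrable_finset_sum _ (fun m _ => hint n m))]
  refine Finset.sum_congr rfl fun n _ => ?_
  rw [MeasureTheory.integral_finset_sum _ (fun m _ => hint n m)]
  refine Finset.sum_congr rfl fun m _ => ?_
  rw [MeasureTheory.integral_const_mul, integral_exp_neg_mul_Ioi_aux (hb n m)]
  ring

set_option maxHeartbeats 1000000 in
/-- Cauchy integral identity for a finite combination `F_N = Σ_{-N<k<0} cₖ 𝔈ₖ` of
negative modes: the integral of `F_N²` over the cross-section equals the sum of
the integrals of `|F_N|²` along the two vertical boundary half-lines, and in
particular is nonnegative. -/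
theorem finite_mode_square_integral_identity (N : ℕ) (c : ℕ → ℝ) :
    (∫ x in (-(1:ℝ)/2)..(1/2),
        (∑ n ∈ Finset.range N, (c n : ℂ) * Emode (-((n : ℝ) + 1/2)) x 0)^2)
      = (((∫ y in Set.Ioi (0:ℝ),
            (Norm.norm (∑ n ∈ Finset.range N,
              (c n : ℂ) * Emode (-((n : ℝ) + 1/2)) (-(1:ℝ)/2) y))^2)
          + (∫ y in Set.Ioi (0:ℝ),
            (Norm.norm (∑ n ∈ Finset.range N,
              (c n : ℂ) * Emode (-((n : ℝ) + 1/2)) (1/2) y))^2) : ℝ) : ℂ) ∧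
    0 ≤ (∫ x in (-(1:ℝ)/2)..(1/2),
        (∑ n ∈ Finset.range N, (c n : ℂ) * Emode (-((n : ℝ) + 1/2)) x 0)^2).re := by
  have habsL : ∀ y : ℝ, (Norm.norm (∑ n ∈ Finset.range N,
        (c n : ℂ) * Emode (-((n : ℝ) + 1/2)) (-(1:ℝ)/2) y))^2
      = (∑ n ∈ Finset.range N, c n * Real.exp (-(Real.pi * ((n:ℝ)+1/2) * y)))^2 := by
    intro y
    have hsum : (∑ n ∈ Finset.range N, (c n : ℂ) * Emode (-((n : ℝ) + 1/2)) (-(1:ℝ)/2) y)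
        = Complex.exp (-(Real.pi:ℂ) * Complex.I/4) *
          ((∑ n ∈ Finset.range N, c n * Real.exp (-(Real.pi * ((n:ℝ)+1/2) * y)) : ℝ) : ℂ) := by
      push_cast
      rw [Finset.mul_sum]
      refine Finset.sum_congr rfl fun n _ => ?_
      rw [emode_left]
      push_cast
      ring
    rw [hsum, norm_mul, Complex.norm_exp, Complex.norm_real, Real.norm_eq_abs]
    have h0 : (-(Real.pi:ℂ) * Complex.I/4).re = 0 := by simp
    rw [h0, Real.exp_zero, one_mul, _root_.sq_abs]
  have habsR : ∀ y : ℝ, (Norm.norm (∑ n ∈ Finset.range N,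
        (c n : ℂ) * Emode (-((n : ℝ) + 1/2)) (1/2) y))^2
      = (∑ n ∈ Finset.range N,
          ((-1:ℝ)^n * c n) * Real.exp (-(Real.pi * ((n:ℝ)+1/2) * y)))^2 := by
    intro y
    have hsum : (∑ n ∈ Finset.range N, (c n : ℂ) * Emode (-((n : ℝ) + 1/2)) (1/2) y)
        = Complex.exp ((Real.pi:ℂ) * Complex.I/4) *
          ((∑ n ∈ Finset.range N,
            ((-1:ℝ)^n * c n) * Real.exp (-(Real.pi * ((n:ℝ)+1/2) * y)) : ℝ) : ℂ) := by
      push_cast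
      rw [Finset.mul_sum]
      refine Finset.sum_congr rfl fun n _ => ?_
      rw [emode_right]
      push_cast
      ring
    rw [hsum, norm_mul, Complex.norm_exp, Complex.norm_real, Real.norm_eq_abs]
    have h0 : ((Real.pi:ℂ) * Complex.I/4).re = 0 := by simp
    rw [h0, Real.exp_zero, one_mul, _root_.sq_abs]
  have hcontE : ∀ k : ℝ, Continuous fun x : ℝ => Emode k x 0 := by
    intro k; unfold Emode; fun_prop
  have hI1 : ∀ n m : ℕ, IntervalIntegrable (fun x : ℝ =>
      ((c n : ℂ) * (c m : ℂ)) *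
        (Emode (-((n : ℝ) + 1/2)) x 0 * Emode (-((m : ℝ) + 1/2)) x 0))
      volume (-(1:ℝ)/2) (1/2) :=
    fun n m => (continuous_const.mul ((hcontE _).mul (hcontE _))).intervalIntegrable _ _
  have expand : ∀ x : ℝ,
      (∑ n ∈ Finset.range N, (c n : ℂ) * Emode (-((n : ℝ) + 1/2)) x 0)^2
      = ∑ n ∈ Finset.range N, ∑ m ∈ Finset.range N,
          ((c n : ℂ) * (c m : ℂ)) *
            (Emode (-((n : ℝ) + 1/2)) x 0 * Emode (-((m : ℝ) + 1/2)) x 0) := by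
    intro x
    rw [sq, Finset.sum_mul_sum]
    exact Finset.sum_congr rfl fun n _ => Finset.sum_congr rfl fun m _ => by ring
  have hL : (∫ x in (-(1:ℝ)/2)..(1/2),
        (∑ n ∈ Finset.range N, (c n : ℂ) * Emode (-((n : ℝ) + 1/2)) x 0)^2)
      = ∑ n ∈ Finset.range N, ∑ m ∈ Finset.range N,
          ((c n : ℂ) * (c m : ℂ)) *
            (((1 + (-1:ℝ)^(n+m)) / (Real.pi * ((n:ℝ)+(m:ℝ)+1)) : ℝ) : ℂ) := by
    have step1 : (∫ x in (-(1:ℝ)/2)..(1/2), ∑ n ∈ Finset.range N, ∑ m ∈ Finset.range N,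
          ((c n : ℂ) * (c m : ℂ)) *
            (Emode (-((n : ℝ) + 1/2)) x 0 * Emode (-((m : ℝ) + 1/2)) x 0))
        = ∑ n ∈ Finset.range N, ∫ x in (-(1:ℝ)/2)..(1/2), ∑ m ∈ Finset.range N,
            ((c n : ℂ) * (c m : ℂ)) *
              (Emode (-((n : ℝ) + 1/2)) x 0 * Emode (-((m : ℝ) + 1/2)) x 0) :=
      intervalIntegral.integral_finset_sum (fun n _ =>
        ((continuous_finset_sum _ (fun m _ =>
          (continuous_const.mul ((hcontE _).mul (hcontE _))))).intervalIntegrable _ _))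
    have step2 : ∀ n : ℕ, (∫ x in (-(1:ℝ)/2)..(1/2), ∑ m ∈ Finset.range N,
          ((c n : ℂ) * (c m : ℂ)) *
            (Emode (-((n : ℝ) + 1/2)) x 0 * Emode (-((m : ℝ) + 1/2)) x 0))
        = ∑ m ∈ Finset.range N, ∫ x in (-(1:ℝ)/2)..(1/2),
            ((c n : ℂ) * (c m : ℂ)) *
              (Emode (-((n : ℝ) + 1/2)) x 0 * Emode (-((m : ℝ) + 1/2)) x 0) := fun n =>
      intervalIntegral.integral_finset_sum (fun m _ => hI1 n m)
    simp only [expand]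
    rw [step1]
    refine Finset.sum_congr rfl fun n _ => ?_
    rw [step2 n]
    refine Finset.sum_congr rfl fun m _ => ?_
    rw [intervalIntegral.integral_const_mul, emode_cross]
  have hRL : (∫ y in Set.Ioi (0:ℝ),
        (Norm.norm (∑ n ∈ Finset.range N,
          (c n : ℂ) * Emode (-((n : ℝ) + 1/2)) (-(1:ℝ)/2) y))^2)
      = ∑ n ∈ Finset.range N, ∑ m ∈ Finset.range N,
          c n * c m / (Real.pi * ((n:ℝ)+(m:ℝ)+1)) := by
    simp only [habsL]
    exact boundary_integral c N
  have hRR : (∫ y in Set.Ioi (0:ℝ),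
        (Norm.norm (∑ n ∈ Finset.range N,
          (c n : ℂ) * Emode (-((n : ℝ) + 1/2)) (1/2) y))^2)
      = ∑ n ∈ Finset.range N, ∑ m ∈ Finset.range N,
          ((-1:ℝ)^n * c n) * ((-1:ℝ)^m * c m) / (Real.pi * ((n:ℝ)+(m:ℝ)+1)) := by
    simp only [habsR]
    exact boundary_integral (fun n => (-1:ℝ)^n * c n) N
  have key : (∫ x in (-(1:ℝ)/2)..(1/2),
        (∑ n ∈ Finset.range N, (c n : ℂ) * Emode (-((n : ℝ) + 1/2)) x 0)^2)
      = (((∫ y in Set.Ioi (0:ℝ),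
            (Norm.norm (∑ n ∈ Finset.range N,
              (c n : ℂ) * Emode (-((n : ℝ) + 1/2)) (-(1:ℝ)/2) y))^2)
          + (∫ y in Set.Ioi (0:ℝ),
            (Norm.norm (∑ n ∈ Finset.range N,
              (c n : ℂ) * Emode (-((n : ℝ) + 1/2)) (1/2) y))^2) : ℝ) : ℂ) := by
    rw [hL, hRL, hRR]
    push_cast
    rw [← Finset.sum_add_distrib]
    refine Finset.sum_congr rfl fun n _ => ?_
    rw [← Finset.sum_add_distrib]
    refine Finset.sum_congr rfl fun m _ => ?_
    ring
  refine ⟨key, ?_⟩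
  rw [key, Complex.ofReal_re]
  exact add_nonneg (MeasureTheory.integral_nonneg fun y => sq_nonneg _)
    (MeasureTheory.integral_nonneg fun y => sq_nonneg _)
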